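/- arXiv:2312.04932 — 2 statements merged into one kernel-verified Lean document; each statement's English description precedes it below -/
import Mathlib

section
/- Let μ be a Borel probability measure on ℝ with right-continuous distribution function M, f ∈ L^p(0,1) for p ∈ [1,∞), F(m) = ∫₀^m f(ω)dω, and let g be as in the generalized chain rule (g = f∘M off atoms, g = difference quotient of F∘M at atoms). Then for all x ∈ ℝ, F(M(x)) = ∫_{(-∞,x]} g dμ; that is, the distributional derivative of F ∘ M equals the measure g·μ. -/
/-!
Let `Q` be the quantile function of `μ`, the generalized inverse of `M`. It pushes Lebesgue
measure on `(0, 1)` forward to `μ`, and `Q ω ≤ x ↔ ω ≤ M x`, so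
`∫_{(-∞, x]} g dμ = ∫_{(0, M x)} g ∘ Q`. Off the jump intervals `(M(a-), M(a))` of the atoms `a`
one has `M (Q ω) = ω` for a.e. `ω`, hence `g ∘ Q = f`; on the jump interval of an atom `a`,
`Q ≡ a` and `g a` is exactly the mean of `f` over that interval. Replacing `f` by its means on
countably many disjoint intervals, each contained in or disjoint from `(0, M x)`, does not change
its integral, which is `F (M x)`.
-/

open MeasureTheory Set Filter Function ProbabilityTheory
open scoped ENNReal Topology

section Averaging

variable {α ι : Type*} [MeasurableSpace α] [Countable ι] {ν : Measure α} [IsFiniteMeasure ν]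
  {f φ : α → ℝ} {s : Set α} {I : ι → Set α}

lemma setIntegral_eq_of_ae_eq_setAverage (hφ : φ =ᵐ[ν.restrict s] fun _ => ⨍ y in s, f y ∂ν) :
    ∫ x in s, φ x ∂ν = ∫ x in s, f x ∂ν := by
  rw [integral_congr_ae hφ, setIntegral_const, measure_smul_setAverage f (measure_ne_top ν s)]

lemma setIntegral_norm_le_of_ae_eq_setAverage
    (hφ : φ =ᵐ[ν.restrict s] fun _ => ⨍ y in s, f y ∂ν) :
    ∫ x in s, ‖φ x‖ ∂ν ≤ ∫ x in s, ‖f x‖ ∂ν := by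
  calc ∫ x in s, ‖φ x‖ ∂ν = ‖∫ x in s, φ x ∂ν‖ := by
        rw [integral_congr_ae (hφ.mono fun x hx => congrArg norm hx), integral_congr_ae hφ,
          setIntegral_const, setIntegral_const, norm_smul, Real.norm_of_nonneg measureReal_nonneg,
          smul_eq_mul]
    _ = ‖∫ x in s, f x ∂ν‖ := by rw [setIntegral_eq_of_ae_eq_setAverage hφ]
    _ ≤ ∫ x in s, ‖f x‖ ∂ν := norm_integral_le_integral_norm _

lemma integrableOn_of_ae_eq_setAverage (hφ : φ =ᵐ[ν.restrict s] fun _ => ⨍ y in s, f y ∂ν) :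
    IntegrableOn φ s ν :=
  IntegrableOn.congr_fun_ae integrableOn_const hφ.symm

theorem integrable_and_integral_eq_of_ae_eq_setAverage (hf : Integrable f ν)
    (hI : ∀ i, MeasurableSet (I i)) (hdisj : Pairwise (Disjoint on I))
    (hφI : ∀ i, φ =ᵐ[ν.restrict (I i)] fun _ => ⨍ y in I i, f y ∂ν)
    (hφ : φ =ᵐ[ν.restrict (⋃ i, I i)ᶜ] f) :
    Integrable φ ν ∧ ∫ x, φ x ∂ν = ∫ x, f x ∂ν := by
  have hU : MeasurableSet (⋃ i, I i) := MeasurableSet.iUnion hI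
  have hφU : IntegrableOn φ (⋃ i, I i) ν :=
    integrableOn_iUnion_of_summable_integral_norm
      (fun i => integrableOn_of_ae_eq_setAverage (hφI i))
      ((hasSum_integral_iUnion hI hdisj hf.norm.integrableOn).summable.of_nonneg_of_le
        (fun i => integral_nonneg fun _ => norm_nonneg _)
        (fun i => setIntegral_norm_le_of_ae_eq_setAverage (hφI i)))
  have hφ_int : Integrable φ ν := by
    rw [← integrableOn_univ, ← union_compl_self (⋃ i, I i)]
    exact hφU.union (hf.integrableOn.congr_fun_ae hφ.symm)
  refine ⟨hφ_int, ?_⟩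
  rw [← integral_add_compl hU hφ_int, ← integral_add_compl hU hf, integral_congr_ae hφ,
    integral_iUnion hI hdisj hφU, integral_iUnion hI hdisj hf.integrableOn]
  exact congrArg (· + _) (tsum_congr fun i => setIntegral_eq_of_ae_eq_setAverage (hφI i))

end Averaging

lemma setIntegral_Ioo_sub_setIntegral_Ioo {f : ℝ → ℝ} {a b c : ℝ} (hab : a ≤ b) (hbc : b ≤ c)
    (hf : IntegrableOn f (Ioo a c)) :
    (∫ x in Ioo a c, f x) - ∫ x in Ioo a b, f x = ∫ x in Ioo b c, f x := by
  rw [← integral_Ioc_eq_integral_Ioo, ← integral_Ioc_eq_integral_Ioo,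
    ← integral_Ioc_eq_integral_Ioo, ← intervalIntegral.integral_of_le (hab.trans hbc),
    ← intervalIntegral.integral_of_le hab, ← intervalIntegral.integral_of_le hbc]
  exact intervalIntegral.integral_interval_sub_left
    ((intervalIntegrable_iff_integrableOn_Ioo_of_le (hab.trans hbc)).2 hf)
    ((intervalIntegrable_iff_integrableOn_Ioo_of_le hab).2 (hf.mono_set (Ioo_subset_Ioo_right hbc)))

lemma Iic_inter_Ioo_ae_eq {a b r : ℝ} (hr : r ≤ b) :
    (Iic r ∩ Ioo a b : Set ℝ) =ᵐ[volume] Ioo a r := by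
  have hsub : Iic r ∩ Ioo a b ⊆ Ioc a r := fun ω hω => ⟨hω.2.1, hω.1⟩
  have hsub' : Ioo a r ⊆ Iic r ∩ Ioo a b := fun ω hω => ⟨hω.2.le, hω.1, hω.2.trans_le hr⟩
  refine (ae_eq_of_subset_of_measure_ge hsub' ?_ measurableSet_Ioo.nullMeasurableSet
    (measure_ne_top_of_subset hsub ?_)).symm
  · rw [Real.volume_Ioo, ← Real.volume_Ioc]
    exact measure_mono hsub
  · simp

lemma countable_setOf_measure_singleton_ne_zero {α : Type*} [MeasurableSpace α]
    [MeasurableSingletonClass α] (μ : Measure α) [SFinite μ] : {x : α | μ {x} ≠ 0}.Countable := by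
  simpa only [pos_iff_ne_zero] using
    Measure.countable_meas_pos_of_disjoint_iUnion (μ := μ) (fun x => measurableSet_singleton x)
      (fun x y hxy => disjoint_singleton.2 hxy)

instance {α : Type*} [MeasurableSpace α] [MeasurableSingletonClass α] (μ : Measure α) [SFinite μ] :
    Countable {x : α | μ {x} ≠ 0} :=
  (countable_setOf_measure_singleton_ne_zero μ).to_subtype

lemma measurableSet_setOf_measure_singleton_eq_zero {α : Type*} [MeasurableSpace α]
    [MeasurableSingletonClass α] (μ : Measure α) [SFinite μ] :
    MeasurableSet {x : α | μ {x} = 0} := by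
  simpa only [compl_ofPred, ne_eq, not_not] using
    (countable_setOf_measure_singleton_ne_zero μ).measurableSet.compl

section Quantile

variable (μ : Measure ℝ)

/-- Meaningful only on `(0, 1)`: elsewhere the set is empty or unbounded below, and `sInf` is
junk. -/
noncomputable def quantile (ω : ℝ) : ℝ := sInf {y | ω ≤ cdf μ y}

/-- Empty unless `a` is an atom of `μ`. -/
def jumpInterval (a : ℝ) : Set ℝ := Ioo (leftLim (cdf μ) a) (cdf μ a)

variable {μ}

lemma nonempty_setOf_le_cdf {ω : ℝ} (hω : ω < 1) : {y | ω ≤ cdf μ y}.Nonempty :=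
  ((tendsto_cdf_atTop μ).eventually (eventually_gt_nhds hω)).exists.imp fun _ => le_of_lt

lemma bddBelow_setOf_le_cdf {ω : ℝ} (hω : 0 < ω) : BddBelow {y | ω ≤ cdf μ y} := by
  obtain ⟨z, hz⟩ := ((tendsto_cdf_atBot μ).eventually (eventually_lt_nhds hω)).exists
  exact ⟨z, fun y hy => le_of_not_ge fun hyz => (hy.trans (monotone_cdf μ hyz)).not_gt hz⟩

lemma quantile_le_iff {ω x : ℝ} (hω : ω ∈ Ioo 0 1) : quantile μ ω ≤ x ↔ ω ≤ cdf μ x := by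
  refine ⟨fun h => ?_, fun h => csInf_le (bddBelow_setOf_le_cdf hω.1) h⟩
  rw [← (cdf μ).iInf_Ioi_eq x]
  refine le_ciInf fun ⟨r, hr⟩ => ?_
  obtain ⟨z, hz, hzr⟩ := exists_lt_of_csInf_lt (nonempty_setOf_le_cdf hω.2) (h.trans_lt hr)
  exact hz.trans (monotone_cdf μ hzr.le)

lemma le_cdf_quantile {ω : ℝ} (hω : ω ∈ Ioo 0 1) : ω ≤ cdf μ (quantile μ ω) :=
  (quantile_le_iff hω).1 le_rfl

lemma leftLim_cdf_quantile_le {ω : ℝ} (hω : ω ∈ Ioo 0 1) :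
    leftLim (cdf μ) (quantile μ ω) ≤ ω := by
  rw [(monotone_cdf μ).leftLim_eq_sSup]
  refine csSup_le (nonempty_Iio.image _) ?_
  rintro _ ⟨y, hy, rfl⟩
  exact (not_le.1 fun h => (not_le.2 hy) ((quantile_le_iff hω).2 h)).le

lemma monotoneOn_quantile : MonotoneOn (quantile μ) (Ioo 0 1) :=
  fun _ ha _ hb hab => (quantile_le_iff ha).2 (hab.trans (le_cdf_quantile hb))

lemma aemeasurable_quantile : AEMeasurable (quantile μ) (volume.restrict (Ioo 0 1)) :=
  aemeasurable_restrict_of_monotoneOn measurableSet_Ioo monotoneOn_quantile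

lemma preimage_quantile_Iic_inter_Ioo (x : ℝ) :
    quantile μ ⁻¹' Iic x ∩ Ioo 0 1 = Iic (cdf μ x) ∩ Ioo 0 1 := by
  ext ω
  exact and_congr_left quantile_le_iff

lemma leftLim_cdf_nonneg (a : ℝ) : 0 ≤ leftLim (cdf μ) a :=
  (cdf_nonneg μ (a - 1)).trans ((monotone_cdf μ).le_leftLim (sub_one_lt a))

lemma jumpInterval_subset_Ioo (a : ℝ) : jumpInterval μ a ⊆ Ioo 0 1 :=
  Ioo_subset_Ioo (leftLim_cdf_nonneg a) (cdf_le_one μ a)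

lemma quantile_eq_of_mem_jumpInterval {ω a : ℝ} (h : ω ∈ jumpInterval μ a) :
    quantile μ ω = a := by
  have hω := jumpInterval_subset_Ioo a h
  refine le_antisymm ((quantile_le_iff hω).2 h.2.le) (le_of_not_gt fun hlt => ?_)
  exact (le_cdf_quantile hω).not_gt (h.1.trans_le' ((monotone_cdf μ).le_leftLim hlt))

lemma pairwise_disjoint_jumpInterval : Pairwise (Disjoint on jumpInterval μ) :=
  fun _ _ hab => disjoint_left.2 fun _ ha hb =>
    hab ((quantile_eq_of_mem_jumpInterval ha).symm.trans (quantile_eq_of_mem_jumpInterval hb))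

lemma jumpInterval_subset_Ioo_cdf {a x : ℝ} (hax : a ≤ x) :
    jumpInterval μ a ⊆ Ioo 0 (cdf μ x) :=
  fun _ hω => ⟨(jumpInterval_subset_Ioo a hω).1, hω.2.trans_le (monotone_cdf μ hax)⟩

lemma disjoint_jumpInterval_Ioo_cdf {a x : ℝ} (hxa : x < a) :
    Disjoint (jumpInterval μ a) (Ioo 0 (cdf μ x)) :=
  disjoint_left.2 fun _ hω hωx =>
    (hω.1.trans hωx.2).not_ge ((monotone_cdf μ).le_leftLim hxa)

lemma comp_quantile_ae_eq_setAverage {f g : ℝ → ℝ}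
    (hg : ∀ a, μ {a} ≠ 0 → g a = ⨍ ω in jumpInterval μ a, f ω) (x : ℝ) {a : ℝ} (ha : μ {a} ≠ 0) :
    (fun ω => g (quantile μ ω)) =ᵐ[(volume.restrict (Ioo 0 (cdf μ x))).restrict (jumpInterval μ a)]
      fun _ => ⨍ ω in jumpInterval μ a, f ω ∂volume.restrict (Ioo 0 (cdf μ x)) := by
  rcases le_or_gt a x with hax | hxa
  · rw [Measure.restrict_restrict_of_subset (jumpInterval_subset_Ioo_cdf hax), ← hg a ha]
    exact ae_restrict_of_forall_mem measurableSet_Ioo fun ω hω => by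
      simp only [quantile_eq_of_mem_jumpInterval hω]
  · rw [Measure.restrict_restrict (s := jumpInterval μ a) measurableSet_Ioo,
      (disjoint_jumpInterval_Ioo_cdf hxa).inter_eq, Measure.restrict_empty]
    exact ae_zero ▸ eventually_bot

variable [IsProbabilityMeasure μ]

lemma measure_singleton_eq_ofReal (a : ℝ) :
    μ {a} = ENNReal.ofReal (cdf μ a - leftLim (cdf μ) a) := by
  rw [← (cdf μ).measure_singleton, measure_cdf]

lemma toReal_measure_singleton (a : ℝ) :
    (μ {a}).toReal = cdf μ a - leftLim (cdf μ) a := by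
  rw [measure_singleton_eq_ofReal,
    ENNReal.toReal_ofReal (sub_nonneg.2 ((monotone_cdf μ).leftLim_le le_rfl))]

lemma toReal_measure_Iio (a : ℝ) : (μ (Iio a)).toReal = leftLim (cdf μ) a := by
  have h := (cdf μ).measure_Iio (tendsto_cdf_atBot μ) a
  rw [measure_cdf, sub_zero] at h
  rw [h, ENNReal.toReal_ofReal (leftLim_cdf_nonneg a)]

lemma cdf_quantile_of_measure_singleton_eq_zero {ω : ℝ} (hω : ω ∈ Ioo 0 1)
    (h : μ {quantile μ ω} = 0) : cdf μ (quantile μ ω) = ω := by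
  have := toReal_measure_singleton (μ := μ) (quantile μ ω)
  rw [h, ENNReal.toReal_zero] at this
  linarith [le_cdf_quantile (μ := μ) hω, leftLim_cdf_quantile_le (μ := μ) hω]

lemma ae_measure_singleton_quantile_eq_zero :
    ∀ᵐ ω, ω ∈ Ioo 0 1 → ω ∉ ⋃ a : {a : ℝ | μ {a} ≠ 0}, jumpInterval μ a →
      μ {quantile μ ω} = 0 := by
  set A := {a : ℝ | μ {a} ≠ 0}
  have hA := countable_setOf_measure_singleton_ne_zero μ
  have hnull : volume (leftLim (cdf μ) '' A ∪ cdf μ '' A) = 0 :=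
    ((hA.image _).union (hA.image _)).measure_zero volume
  filter_upwards [measure_eq_zero_iff_ae_notMem.1 hnull] with ω hωA hω hout
  by_contra hatom
  rcases (leftLim_cdf_quantile_le (μ := μ) hω).lt_or_eq with hL | hL
  · rcases (le_cdf_quantile (μ := μ) hω).lt_or_eq with hc | hc
    · exact hout (mem_iUnion.2 ⟨⟨_, hatom⟩, hL, hc⟩)
    · exact hωA (Or.inr ⟨_, hatom, hc.symm⟩)
  · exact hωA (Or.inl ⟨_, hatom, hL⟩)

theorem map_quantile : (volume.restrict (Ioo 0 1)).map (quantile μ) = μ := by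
  refine Measure.ext_of_Iic _ _ fun x => ?_
  rw [Measure.map_apply_of_aemeasurable aemeasurable_quantile measurableSet_Iic,
    Measure.restrict_apply' measurableSet_Ioo, preimage_quantile_Iic_inter_Ioo,
    measure_congr (Iic_inter_Ioo_ae_eq (cdf_le_one μ x)), Real.volume_Ioo, sub_zero, ofReal_cdf]

theorem map_cdf_restrict_le :
    (μ.restrict {a | μ {a} = 0}).map (cdf μ) ≤ volume.restrict (Ioo 0 1) := by
  have hN := measurableSet_setOf_measure_singleton_eq_zero μ
  have hc : Measurable (cdf μ) := (monotone_cdf μ).measurable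
  refine Measure.le_iff.2 fun s hs => ?_
  rw [Measure.map_apply hc hs, Measure.restrict_apply (hc hs), Measure.restrict_apply hs]
  calc μ (cdf μ ⁻¹' s ∩ {a | μ {a} = 0})
      = volume (quantile μ ⁻¹' (cdf μ ⁻¹' s ∩ {a | μ {a} = 0}) ∩ Ioo 0 1) := by
        rw [← Measure.restrict_apply' measurableSet_Ioo,
          ← Measure.map_apply_of_aemeasurable aemeasurable_quantile ((hc hs).inter hN),
          map_quantile]
    _ ≤ volume (s ∩ Ioo 0 1) := measure_mono fun ω ⟨⟨hs', hN'⟩, hω⟩ =>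
        ⟨by rwa [← cdf_quantile_of_measure_singleton_eq_zero hω hN'], hω⟩

theorem aestronglyMeasurable_of_eq_comp_cdf {f g : ℝ → ℝ}
    (hf : AEStronglyMeasurable f (volume.restrict (Ioo 0 1)))
    (hg : ∀ a, μ {a} = 0 → g a = f (cdf μ a)) : AEStronglyMeasurable g μ := by
  rw [← Measure.restrict_univ (μ := μ), ← union_compl_self {a : ℝ | μ {a} ≠ 0},
    aestronglyMeasurable_union_iff]
  constructor
  · rw [← iUnion_of_singleton_coe {a : ℝ | μ {a} ≠ 0}, aestronglyMeasurable_iUnion_iff]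
    refine fun a => (aestronglyMeasurable_const (b := g a)).congr ?_
    filter_upwards [ae_restrict_mem (measurableSet_singleton (a : ℝ))] with y hy
    rw [mem_singleton_iff.1 hy]
  · simp only [compl_ofPred, ne_eq, not_not]
    refine ((hf.mono_measure map_cdf_restrict_le).comp_aemeasurable
      (monotone_cdf μ).measurable.aemeasurable).congr ?_
    filter_upwards [ae_restrict_mem (measurableSet_setOf_measure_singleton_eq_zero μ)] with a ha
    exact (hg a ha).symm

theorem setIntegral_Iic_eq_setIntegral_comp_quantile {g : ℝ → ℝ}
    (hg : AEStronglyMeasurable g μ) (x : ℝ) :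
    ∫ y in Iic x, g y ∂μ = ∫ ω in Ioo 0 (cdf μ x), g (quantile μ ω) := by
  conv_lhs => rw [← map_quantile (μ := μ)]
  rw [setIntegral_map measurableSet_Iic (by rwa [map_quantile]) aemeasurable_quantile,
    Measure.restrict_restrict' measurableSet_Ioo, preimage_quantile_Iic_inter_Ioo,
    setIntegral_congr_set (Iic_inter_Ioo_ae_eq (cdf_le_one μ x))]

lemma setAverage_jumpInterval {f : ℝ → ℝ} (hf : IntegrableOn f (Ioo 0 1)) (a : ℝ) :
    ⨍ ω in jumpInterval μ a, f ω =
      ((∫ ω in Ioo 0 (cdf μ a), f ω) - ∫ ω in Ioo 0 (leftLim (cdf μ) a), f ω) / (μ {a}).toReal := by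
  have hLc : leftLim (cdf μ) a ≤ cdf μ a := (monotone_cdf μ).leftLim_le le_rfl
  rw [setIntegral_Ioo_sub_setIntegral_Ioo (leftLim_cdf_nonneg a) hLc
      (hf.mono_set (Ioo_subset_Ioo_right (cdf_le_one μ a))),
    setAverage_eq, jumpInterval, Real.volume_real_Ioo_of_le hLc, toReal_measure_singleton,
    smul_eq_mul, div_eq_inv_mul]

lemma comp_quantile_ae_eq_off_jumpInterval {f g : ℝ → ℝ}
    (hg : ∀ a, μ {a} = 0 → g a = f (cdf μ a)) {s : Set ℝ} (hs : MeasurableSet s)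
    (hs01 : s ⊆ Ioo 0 1) :
    (fun ω => g (quantile μ ω))
      =ᵐ[(volume.restrict s).restrict (⋃ a : {a : ℝ | μ {a} ≠ 0}, jumpInterval μ a)ᶜ] f := by
  have hU : MeasurableSet (⋃ a : {a : ℝ | μ {a} ≠ 0}, jumpInterval μ a) :=
    MeasurableSet.iUnion fun _ => measurableSet_Ioo
  rw [Measure.restrict_restrict hU.compl]
  filter_upwards [ae_restrict_mem (hU.compl.inter hs),
    ae_restrict_of_ae (ae_measure_singleton_quantile_eq_zero (μ := μ))] with ω hω h
  have hatom := h (hs01 hω.2) hω.1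
  rw [hg _ hatom, cdf_quantile_of_measure_singleton_eq_zero (hs01 hω.2) hatom]

theorem setIntegral_comp_quantile {f g : ℝ → ℝ} (hf : IntegrableOn f (Ioo 0 1))
    (hg_cont : ∀ a, μ {a} = 0 → g a = f (cdf μ a))
    (hg_atom : ∀ a, μ {a} ≠ 0 → g a = ⨍ ω in jumpInterval μ a, f ω) (x : ℝ) :
    ∫ ω in Ioo 0 (cdf μ x), g (quantile μ ω) = ∫ ω in Ioo 0 (cdf μ x), f ω := by
  have hx01 : Ioo 0 (cdf μ x) ⊆ Ioo 0 1 := Ioo_subset_Ioo_right (cdf_le_one μ x)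
  exact (integrable_and_integral_eq_of_ae_eq_setAverage (hf.mono_set hx01)
    (fun _ => measurableSet_Ioo)
    ((pairwise_disjoint_jumpInterval (μ := μ)).comp_of_injective Subtype.val_injective)
    (fun a => comp_quantile_ae_eq_setAverage hg_atom x a.2)
    (comp_quantile_ae_eq_off_jumpInterval hg_cont measurableSet_Ioo hx01)).2

end Quantile

theorem stmt_3_general (μ : Measure ℝ) [IsProbabilityMeasure μ]
    (p : ℝ≥0∞) (hp : 1 ≤ p)
    (f F M Mleft g : ℝ → ℝ)
    (hf : MemLp f p (volume.restrict (Ioo (0:ℝ) 1)))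
    (hF : ∀ m, F m = ∫ ω in Ioo (0:ℝ) m, f ω)
    (hM : ∀ x, M x = (μ (Iic x)).toReal)
    (hMleft : ∀ x, Mleft x = (μ (Iio x)).toReal)
    (hg : ∀ x, g x = if μ {x} = 0 then f (M x)
      else (F (M x) - F (Mleft x)) / (μ {x}).toReal) :
    ∀ x : ℝ, F (M x) = ∫ y in Iic x, g y ∂μ := by
  have hMc (y : ℝ) : M y = cdf μ y := by rw [hM, cdf_eq_real, measureReal_def]
  have hfi : IntegrableOn f (Ioo 0 1) := hf.integrable hp
  have hg_cont (a : ℝ) (ha : μ {a} = 0) : g a = f (cdf μ a) := by rw [hg, if_pos ha, hMc]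
  have hg_atom (a : ℝ) (ha : μ {a} ≠ 0) : g a = ⨍ ω in jumpInterval μ a, f ω := by
    rw [hg, if_neg ha, hMc, hMleft, toReal_measure_Iio, hF, hF, setAverage_jumpInterval hfi]
  intro x
  rw [hF, hMc, setIntegral_Iic_eq_setIntegral_comp_quantile
      (aestronglyMeasurable_of_eq_comp_cdf hf.1 hg_cont),
    setIntegral_comp_quantile hfi hg_cont hg_atom]

/-- Generalized BV chain rule: the distributional derivative of `F ∘ M` is the measure `g·μ`,
i.e. `F(M(x)) = ∫_{(-∞,x]} g dμ` for all `x`. -/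
theorem stmt_3 (μ : Measure ℝ) [IsProbabilityMeasure μ]
    (p : ℝ≥0∞) (hp : 1 ≤ p) (hp' : p ≠ ⊤)
    (f F M Mleft g : ℝ → ℝ)
    (hf : MemLp f p (volume.restrict (Ioo (0:ℝ) 1)))
    (hF : ∀ m, F m = ∫ ω in Ioo (0:ℝ) m, f ω)
    (hM : ∀ x, M x = (μ (Iic x)).toReal)
    (hMleft : ∀ x, Mleft x = (μ (Iio x)).toReal)
    (hg : ∀ x, g x = if μ {x} = 0 then f (M x)
      else (F (M x) - F (Mleft x)) / (μ {x}).toReal) :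
    ∀ x : ℝ, F (M x) = ∫ y in Iic x, g y ∂μ :=
  stmt_3_general μ p hp f F M Mleft g hf hF hM hMleft hg
end

section
/- Let X ∈ L²(0,1) be nondecreasing and right-continuous, let M be its right-continuous generalized inverse (a probability distribution function on ℝ), let W ∈ L²(0,1) with primitive 𝒲(m) = ∫₀^m W. Let 𝒲'_M denote the Radon–Nikodym derivative of ∂_x(𝒲∘M) with respect to ∂_x M (given by the generalized chain rule). Then (Proj_{H_X} W)(m) = 𝒲'_M(X(m)) for a.e. m ∈ (0,1), where Proj_{H_X} is the L²-projection onto the subspace of functions constant on each maximal interval where X is constant. -/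
/-!
By monotonicity, the level set `{X = x}` of `X` on `(0, 1)` is an interval with endpoints
`a ≤ b`, and `{X ≤ x}` is an interval from `0` to `b`; hence `μ {x} = b - a`, `M x = b` and
`M (x-) = a`. If `a < b`, then `(a, b)` is a maximal interval of constancy of `X` and
`𝒲'_M x = (𝒲 b - 𝒲 a) / (b - a)` is the average of `W` over it. If `a = b`, then
`M (X m) = m` and `𝒲'_M (X m) = W m`. What is left are the endpoints of nondegenerate level sets,
two per atom of `μ`, hence countably many.
-/

open MeasureTheory Set
open scoped ENNReal

/-- The set of points of `(0,1)` where `X` is constant in a neighborhood. -/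
def locallyConstantSet (X : ℝ → ℝ) : Set ℝ :=
  {m | m ∈ Ioo (0:ℝ) 1 ∧
    ∃ ε > 0, ∀ y ∈ Metric.ball m ε, ∀ z ∈ Metric.ball m ε, X y = X z}

/-- `(a,b)` is a maximal open interval of the locally-constant set of `X`. -/
def IsMaxInterval (X : ℝ → ℝ) (a b : ℝ) : Prop :=
  a < b ∧ Ioo a b ⊆ locallyConstantSet X ∧
    a ∉ locallyConstantSet X ∧ b ∉ locallyConstantSet X

lemma volume_eq_ofReal_of_Ioo_subset_of_subset_Icc {s : Set ℝ} {a b : ℝ}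
    (hIoo : Ioo a b ⊆ s) (hIcc : s ⊆ Icc a b) : volume s = ENNReal.ofReal (b - a) :=
  le_antisymm (Real.volume_Icc ▸ measure_mono hIcc) (Real.volume_Ioo ▸ measure_mono hIoo)

lemma interior_subset_Ioo_csInf_csSup {s : Set ℝ} (hb : BddBelow s) (ha : BddAbove s) :
    interior s ⊆ Ioo (sInf s) (sSup s) :=
  interior_Icc (a := sInf s) (b := sSup s) ▸ interior_mono (subset_Icc_csInf_csSup hb ha)

lemma integral_Ioo_sub_integral_Ioo {E : Type*} [NormedAddCommGroup E] [NormedSpace ℝ E]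
    {f : ℝ → E} {a b c : ℝ} (hab : a ≤ b) (hbc : b ≤ c) (hf : IntegrableOn f (Ioo a c)) :
    (∫ x in Ioo a c, f x) - ∫ x in Ioo a b, f x = ∫ x in Ioo b c, f x := by
  have hint : ∀ {d}, a ≤ d → d ≤ c → IntervalIntegrable f volume a d := fun had hdc =>
    (intervalIntegrable_iff_integrableOn_Ioo_of_le had).2 (hf.mono_set (Ioo_subset_Ioo_right hdc))
  rw [← integral_Ioc_eq_integral_Ioo, ← integral_Ioc_eq_integral_Ioo,
    ← integral_Ioc_eq_integral_Ioo, ← intervalIntegral.integral_of_le (hab.trans hbc),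
    ← intervalIntegral.integral_of_le hab, ← intervalIntegral.integral_of_le hbc,
    intervalIntegral.integral_interval_sub_left (hint (hab.trans hbc) le_rfl) (hint hab hbc)]

lemma toReal_measure_Iio_s7 {α : Type*} [LinearOrder α] [MeasurableSpace α]
    [MeasurableSingletonClass α] (μ : Measure α) [IsFiniteMeasure μ] (x : α) :
    (μ (Iio x)).toReal = (μ (Iic x)).toReal - (μ {x}).toReal := by
  rw [← Iio_union_right, measure_union (by simp) (measurableSet_singleton x),
    ENNReal.toReal_add (measure_ne_top _ _) (measure_ne_top _ _), add_sub_cancel_right]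

def levelSet (X : ℝ → ℝ) (x : ℝ) : Set ℝ := X ⁻¹' {x} ∩ Ioo 0 1

section levelSet

variable {X : ℝ → ℝ} {m : ℝ}

lemma bddBelow_levelSet (X : ℝ → ℝ) (x : ℝ) : BddBelow (levelSet X x) :=
  bddBelow_Ioo.mono inter_subset_right

lemma bddAbove_levelSet (X : ℝ → ℝ) (x : ℝ) : BddAbove (levelSet X x) :=
  bddAbove_Ioo.mono inter_subset_right

lemma mem_levelSet_self (hm : m ∈ Ioo (0 : ℝ) 1) : m ∈ levelSet X (X m) := ⟨rfl, hm⟩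

lemma csInf_levelSet_nonneg {x : ℝ} (hx : (levelSet X x).Nonempty) : 0 ≤ sInf (levelSet X x) :=
  le_csInf hx fun _ ht => ht.2.1.le

lemma csSup_levelSet_le_one {x : ℝ} (hx : (levelSet X x).Nonempty) : sSup (levelSet X x) ≤ 1 :=
  csSup_le hx fun _ ht => ht.2.2.le

lemma ordConnected_levelSet (hX : MonotoneOn X (Ioo 0 1)) (x : ℝ) :
    (levelSet X x).OrdConnected := by
  refine ⟨fun u hu v hv t ht => ?_⟩
  have htI : t ∈ Ioo (0 : ℝ) 1 := ⟨hu.2.1.trans_le ht.1, ht.2.trans_lt hv.2.2⟩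
  refine ⟨le_antisymm ?_ ?_, htI⟩
  · exact (hX htI hv.2 ht.2).trans_eq hv.1
  · exact hu.1.symm.trans_le (hX hu.2 htI ht.1)

lemma Ioo_subset_levelSet (hX : MonotoneOn X (Ioo 0 1)) (hm : m ∈ Ioo (0 : ℝ) 1) :
    Ioo (sInf (levelSet X (X m))) (sSup (levelSet X (X m))) ⊆ levelSet X (X m) :=
  IsConnected.Ioo_csInf_csSup_subset ⟨⟨m, mem_levelSet_self hm⟩,
    (ordConnected_levelSet hX _).isPreconnected⟩ (bddBelow_levelSet X _) (bddAbove_levelSet X _)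

lemma volume_levelSet (hX : MonotoneOn X (Ioo 0 1)) (hm : m ∈ Ioo (0 : ℝ) 1) :
    volume (levelSet X (X m)) =
      ENNReal.ofReal (sSup (levelSet X (X m)) - sInf (levelSet X (X m))) :=
  volume_eq_ofReal_of_Ioo_subset_of_subset_Icc (Ioo_subset_levelSet hX hm)
    (subset_Icc_csInf_csSup (bddBelow_levelSet X _) (bddAbove_levelSet X _))

lemma volume_sublevelSet (hX : MonotoneOn X (Ioo 0 1)) (hm : m ∈ Ioo (0 : ℝ) 1) :
    volume (X ⁻¹' Iic (X m) ∩ Ioo 0 1) = ENNReal.ofReal (sSup (levelSet X (X m))) := by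
  set L := levelSet X (X m)
  have hmL : m ∈ L := mem_levelSet_self hm
  rw [← sub_zero (sSup L)]
  refine volume_eq_ofReal_of_Ioo_subset_of_subset_Icc (fun t ht => ?_) (fun t ht => ?_)
  · obtain ⟨u, huL, htu⟩ := exists_lt_of_lt_csSup ⟨m, hmL⟩ ht.2
    have htI : t ∈ Ioo (0 : ℝ) 1 := ⟨ht.1, htu.trans huL.2.2⟩
    exact ⟨(hX htI huL.2 htu.le).trans_eq huL.1, htI⟩
  · refine ⟨ht.2.1.le, not_lt.1 fun hLt => ?_⟩
    have hmt : m < t := (le_csSup (bddAbove_levelSet X _) hmL).trans_lt hLt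
    have htL : t ∈ L := ⟨le_antisymm ht.1 (hX hm ht.2 hmt.le), ht.2⟩
    exact (le_csSup (bddAbove_levelSet X _) htL).not_gt hLt

lemma mem_locallyConstantSet_iff :
    m ∈ locallyConstantSet X ↔ m ∈ interior (levelSet X (X m)) := by
  rw [mem_interior_iff_mem_nhds]
  constructor
  · rintro ⟨hm, ε, hε, hconst⟩
    filter_upwards [Metric.ball_mem_nhds m hε, isOpen_Ioo.mem_nhds hm] with t ht htI
    exact ⟨hconst t ht m (Metric.mem_ball_self hε), htI⟩
  · intro h
    obtain ⟨ε, hε, hball⟩ := Metric.mem_nhds_iff.1 h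
    refine ⟨(mem_of_mem_nhds h).2, ε, hε, fun y hy z hz => ?_⟩
    exact (hball hy).1.trans (hball hz).1.symm

lemma apply_eq_of_mem_closure_levelSet {x : ℝ} (hm : m ∈ locallyConstantSet X)
    (hmx : m ∈ closure (levelSet X x)) : X m = x := by
  obtain ⟨-, ε, hε, hconst⟩ := hm
  obtain ⟨t, htL, ht⟩ := Metric.mem_closure_iff.1 hmx ε hε
  exact (hconst m (Metric.mem_ball_self hε) t (Metric.mem_ball'.2 ht)).trans htL.1

lemma mem_Ioo_of_mem_locallyConstantSet (hm : m ∈ locallyConstantSet X) :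
    m ∈ Ioo (sInf (levelSet X (X m))) (sSup (levelSet X (X m))) :=
  interior_subset_Ioo_csInf_csSup (bddBelow_levelSet X _) (bddAbove_levelSet X _)
    (mem_locallyConstantSet_iff.1 hm)

lemma notMem_locallyConstantSet_of_mem_closure {x y : ℝ} (hy : y ∈ closure (levelSet X x))
    (hyIoo : y ∉ Ioo (sInf (levelSet X x)) (sSup (levelSet X x))) :
    y ∉ locallyConstantSet X := fun hlc =>
  hyIoo (apply_eq_of_mem_closure_levelSet hlc hy ▸ mem_Ioo_of_mem_locallyConstantSet hlc)

lemma isMaxInterval_levelSet (hX : MonotoneOn X (Ioo 0 1)) (hm : m ∈ Ioo (0 : ℝ) 1)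
    (hlt : sInf (levelSet X (X m)) < sSup (levelSet X (X m))) :
    IsMaxInterval X (sInf (levelSet X (X m))) (sSup (levelSet X (X m))) := by
  set L := levelSet X (X m)
  have hne : L.Nonempty := ⟨m, mem_levelSet_self hm⟩
  refine ⟨hlt, fun t ht => ?_, ?_, ?_⟩
  · have htL := Ioo_subset_levelSet hX hm ht
    rw [mem_locallyConstantSet_iff, htL.1]
    exact interior_maximal (Ioo_subset_levelSet hX hm) isOpen_Ioo ht
  · exact notMem_locallyConstantSet_of_mem_closure (csInf_mem_closure hne (bddBelow_levelSet X _))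
      (fun h => lt_irrefl _ h.1)
  · exact notMem_locallyConstantSet_of_mem_closure (csSup_mem_closure hne (bddAbove_levelSet X _))
      (fun h => lt_irrefl _ h.2)

lemma Set.Countable.setOf_apply_mem_notMem_Ioo {A : Set ℝ} (hA : A.Countable) :
    {m ∈ Ioo (0 : ℝ) 1 | X m ∈ A ∧
      m ∉ Ioo (sInf (levelSet X (X m))) (sSup (levelSet X (X m)))}.Countable := by
  refine (hA.biUnion fun x _ => (countable_singleton (sSup (levelSet X x))).insert
    (sInf (levelSet X x))).mono fun m ⟨hm, hmA, hmIoo⟩ => mem_biUnion hmA ?_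
  have hmL := subset_Icc_csInf_csSup (bddBelow_levelSet X _) (bddAbove_levelSet X _)
    (mem_levelSet_self hm)
  rcases hmL.1.eq_or_lt with h | h
  · exact Or.inl h.symm
  · exact Or.inr (hmL.2.eq_of_not_lt fun h' => hmIoo ⟨h, h'⟩)

section pushforward

variable {μ : Measure ℝ}

lemma measure_eq_volume_preimage_inter (hX : MonotoneOn X (Ioo 0 1))
    (hμ : μ = (volume.restrict (Ioo 0 1)).map X) {s : Set ℝ} (hs : MeasurableSet s) :
    μ s = volume (X ⁻¹' s ∩ Ioo 0 1) := by
  rw [hμ, Measure.map_apply_of_aemeasurable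
    (aemeasurable_restrict_of_monotoneOn measurableSet_Ioo hX) hs,
    Measure.restrict_apply' measurableSet_Ioo]

lemma measure_Iic_apply_eq (hX : MonotoneOn X (Ioo 0 1))
    (hμ : μ = (volume.restrict (Ioo 0 1)).map X) (hm : m ∈ Ioo (0 : ℝ) 1) :
    μ (Iic (X m)) = ENNReal.ofReal (sSup (levelSet X (X m))) := by
  rw [measure_eq_volume_preimage_inter hX hμ measurableSet_Iic, volume_sublevelSet hX hm]

lemma measure_singleton_apply_eq (hX : MonotoneOn X (Ioo 0 1))
    (hμ : μ = (volume.restrict (Ioo 0 1)).map X) (hm : m ∈ Ioo (0 : ℝ) 1) :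
    μ {X m} = ENNReal.ofReal (sSup (levelSet X (X m)) - sInf (levelSet X (X m))) := by
  rw [measure_eq_volume_preimage_inter hX hμ (measurableSet_singleton _),
    ← volume_levelSet hX hm, levelSet]

end pushforward

end levelSet

theorem stmt_7_general (X W 𝒲 P : ℝ → ℝ)
    (hX : MonotoneOn X (Ioo (0:ℝ) 1))
    (hW : MemLp W 2 (volume.restrict (Ioo (0:ℝ) 1)))
    (h𝒲 : ∀ m, 𝒲 m = ∫ ω in Ioo (0:ℝ) m, W ω)
    (μ : Measure ℝ) (hμ : μ = Measure.map X (volume.restrict (Ioo (0:ℝ) 1)))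
    (M Mleft g : ℝ → ℝ)
    (hM : ∀ x, M x = (μ (Iic x)).toReal)
    (hMleft : ∀ x, Mleft x = (μ (Iio x)).toReal)
    (hg : ∀ x, g x = if μ {x} = 0 then W (M x)
      else (𝒲 (M x) - 𝒲 (Mleft x)) / (μ {x}).toReal)
    (hP1 : ∀ m ∈ Ioo (0:ℝ) 1 \ locallyConstantSet X, P m = W m)
    (hP2 : ∀ a b, IsMaxInterval X a b → ∀ m ∈ Ioo a b,
      P m = (b - a)⁻¹ * ∫ ω in Ioo a b, W ω) :
    ∀ᵐ m ∂(volume.restrict (Ioo (0:ℝ) 1)), P m = g (X m) := by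
  have : IsFiniteMeasure μ := hμ ▸ inferInstance
  have hatoms : {x | 0 < μ {x}}.Countable :=
    Measure.countable_meas_pos_of_disjoint_iUnion measurableSet_singleton
      fun _ _ h => disjoint_singleton.2 h
  rw [ae_restrict_iff' measurableSet_Ioo]
  filter_upwards [measure_eq_zero_iff_ae_notMem.1
    (hatoms.setOf_apply_mem_notMem_Ioo.measure_zero volume)] with m hmE hm
  set L := levelSet X (X m)
  have hLne : L.Nonempty := ⟨m, mem_levelSet_self hm⟩
  have hmL : m ∈ Icc (sInf L) (sSup L) :=
    subset_Icc_csInf_csSup (bddBelow_levelSet X _) (bddAbove_levelSet X _) (mem_levelSet_self hm)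
  have hMm : M (X m) = sSup L := by
    rw [hM, measure_Iic_apply_eq hX hμ hm, ENNReal.toReal_ofReal (hm.1.le.trans hmL.2)]
  have hatom := measure_singleton_apply_eq hX hμ hm
  by_cases hmIoo : m ∈ Ioo (sInf L) (sSup L)
  · have hlt := hmIoo.1.trans hmIoo.2
    have hMleftm : Mleft (X m) = sInf L := by
      rw [hMleft, toReal_measure_Iio_s7, ← hM, hMm, hatom, ENNReal.toReal_ofReal (by linarith)]
      ring
    have hWi : IntegrableOn W (Ioo 0 (sSup L)) :=
      IntegrableOn.mono_set (hW.integrable one_le_two)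
        (Ioo_subset_Ioo_right (csSup_levelSet_le_one hLne))
    rw [hP2 _ _ (isMaxInterval_levelSet hX hm hlt) m hmIoo, hg, if_neg (by simpa [hatom]),
      hMm, hMleftm, hatom, ENNReal.toReal_ofReal (by linarith), h𝒲, h𝒲,
      integral_Ioo_sub_integral_Ioo (csInf_levelSet_nonneg hLne) hlt.le hWi,
      div_eq_inv_mul]
  · have hatom0 : μ {X m} = 0 := by
      by_contra h
      exact hmE ⟨hm, pos_iff_ne_zero.2 h, hmIoo⟩
    have hm_eq : sSup L = m := by
      rw [hatom, ENNReal.ofReal_eq_zero] at hatom0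
      linarith [hmL.1, hmL.2]
    rw [hP1 m ⟨hm, fun h => hmIoo (mem_Ioo_of_mem_locallyConstantSet h)⟩, hg, if_pos hatom0,
      hMm, hm_eq]

/-- Projection on `H_X` and the Radon–Nikodym derivative (Lemma 5.1): for `X` nondecreasing
and right-continuous with generalized inverse `M`, `W ∈ L²(0,1)` with primitive `𝒲`, the
`L²`-projection of `W` onto `H_X` satisfies `(Proj_{H_X} W)(m) = 𝒲'_M(X(m))` a.e., where
`𝒲'_M` is the Radon–Nikodym derivative of `∂ₓ(𝒲 ∘ M)` with respect to `∂ₓ M` given by the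
generalized chain rule. -/
theorem stmt_7 (X W 𝒲 P : ℝ → ℝ)
    (hX : MonotoneOn X (Ioo (0:ℝ) 1))
    (hXrc : ∀ m ∈ Ioo (0:ℝ) 1, ContinuousWithinAt X (Ici m) m)
    (hXm : MemLp X 2 (volume.restrict (Ioo (0:ℝ) 1)))
    (hW : MemLp W 2 (volume.restrict (Ioo (0:ℝ) 1)))
    (h𝒲 : ∀ m, 𝒲 m = ∫ ω in Ioo (0:ℝ) m, W ω)
    (μ : Measure ℝ) (hμ : μ = Measure.map X (volume.restrict (Ioo (0:ℝ) 1)))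
    (M Mleft g : ℝ → ℝ)
    (hM : ∀ x, M x = (μ (Iic x)).toReal)
    (hMleft : ∀ x, Mleft x = (μ (Iio x)).toReal)
    (hg : ∀ x, g x = if μ {x} = 0 then W (M x)
      else (𝒲 (M x) - 𝒲 (Mleft x)) / (μ {x}).toReal)
    (hP1 : ∀ m ∈ Ioo (0:ℝ) 1 \ locallyConstantSet X, P m = W m)
    (hP2 : ∀ a b, IsMaxInterval X a b → ∀ m ∈ Ioo a b,
      P m = (b - a)⁻¹ * ∫ ω in Ioo a b, W ω) :
    ∀ᵐ m ∂(volume.restrict (Ioo (0:ℝ) 1)), P m = g (X m) :=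
  stmt_7_general X W 𝒲 P hX hW h𝒲 μ hμ M Mleft g hM hMleft hg hP1 hP2
end
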